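/- arXiv:2204.07295 — 4 statements merged into one kernel-verified Lean document; each statement's English description precedes it below -/
import Mathlib

section
/- Let s > 0 and let x, y ∈ ℝ² with y ≠ x and |y − (x − s e₂)| > s, where e₂ = (0,1). Then e^{−τ/(2s)} |v_τ(y;x)| → 0 as τ → ∞. -/
/-- The Kelvin-transformed complex geometrical optics solution
`v_τ(y;x) = exp(−iτ/((y₁−x₁)+i(y₂−x₂)))`. -/
noncomputable def vtau (τ : ℝ) (x y : ℝ × ℝ) : ℂ :=
  Complex.exp (-(Complex.I * (τ : ℂ)) / (((y.1 - x.1 : ℝ) : ℂ) + Complex.I * ((y.2 - x.2 : ℝ) : ℂ)))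

/-! Writing `z = y − x`, the modulus `|v_τ| = exp(−τ z₂/|z|²)` is an exact exponential, so
`e^{−τ/(2s)} |v_τ| = exp(−c τ)` with `c = 1/(2s) + z₂/|z|²`. Expanding the square,
`|z + s e₂| > s` reads `|z|² + 2 s z₂ > 0`, which is exactly `c > 0`. -/

open Complex in
theorem Complex.re_neg_I_mul_ofReal_div (τ : ℝ) (z : ℂ) :
    (-(I * τ) / z).re = -τ * z.im / normSq z := by
  simp [div_re]

theorem norm_vtau (τ : ℝ) (x y : ℝ × ℝ) :
    ‖vtau τ x y‖ = Real.exp (-τ * (y.2 - x.2) / ((y.1 - x.1) ^ 2 + (y.2 - x.2) ^ 2)) := by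
  rw [vtau, Complex.norm_exp, Complex.re_neg_I_mul_ofReal_div]
  simp [Complex.normSq_apply, sq]

theorem one_div_two_mul_add_div_pos {s a b : ℝ} (hs : 0 < s) (h : s ^ 2 < a ^ 2 + (b + s) ^ 2) :
    0 < 1 / (2 * s) + b / (a ^ 2 + b ^ 2) := by
  have hr : 0 < a ^ 2 + b ^ 2 + 2 * b * s := by nlinarith
  have hr2 : 0 < a ^ 2 + b ^ 2 := by nlinarith [sq_nonneg b, sq_nonneg a, hr]
  rw [div_add_div _ _ (by positivity) hr2.ne']
  exact div_pos (by linarith) (by positivity)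

theorem stmt1_general (s : ℝ) (hs : 0 < s) (x y : ℝ × ℝ)
    (h : s < Real.sqrt ((y.1 - x.1) ^ 2 + (y.2 - x.2 + s) ^ 2)) :
    Filter.Tendsto (fun τ : ℝ => Real.exp (-τ / (2 * s)) * ‖vtau τ x y‖)
      Filter.atTop (nhds 0) := by
  set c := 1 / (2 * s) + (y.2 - x.2) / ((y.1 - x.1) ^ 2 + (y.2 - x.2) ^ 2)
  have hc : 0 < c := one_div_two_mul_add_div_pos hs ((Real.lt_sqrt hs.le).mp h)
  have hexp : ∀ τ : ℝ, Real.exp (-τ / (2 * s)) * ‖vtau τ x y‖ = Real.exp (-(c * τ)) := by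
    intro τ
    rw [norm_vtau, ← Real.exp_add]
    congr 1
    simp only [c]
    ring
  simp only [hexp]
  exact Real.tendsto_exp_neg_atTop_nhds_zero.comp (Filter.tendsto_id.const_mul_atTop hc)

theorem stmt1 (s : ℝ) (hs : 0 < s) (x y : ℝ × ℝ) (hxy : y ≠ x)
    (h : s < Real.sqrt ((y.1 - x.1) ^ 2 + (y.2 - x.2 + s) ^ 2)) :
    Filter.Tendsto (fun τ : ℝ => Real.exp (-τ / (2 * s)) * ‖vtau τ x y‖)
      Filter.atTop (nhds 0) :=
  stmt1_general s hs x y h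
end

section
/- Let s > 0 and let x, y ∈ ℝ² with y ≠ x and |y − (x − s e₂)| = s, where e₂ = (0,1). Then for every τ > 0, |e^{−τ/(2s)} v_τ(y;x)| = 1; equivalently, the ℂ²-valued field satisfies ‖e^{−τ/(2s)} (v_τ(y;x), i v_τ(y;x))‖ = √2 for all τ > 0. -/
namespace Complex

theorem normSq_eq_of_norm_add_mul_I_eq {z : ℂ} {s : ℝ} (h : ‖z + s * I‖ = s) :
    normSq z = -(2 * s * z.im) := by
  have hsq : normSq (z + s * I) = s ^ 2 := by rw [normSq_eq_norm_sq, h]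
  rw [normSq_apply] at hsq
  rw [normSq_apply]
  simp only [add_re, add_im, ofReal_re, ofReal_im, I_re, I_im, mul_re, mul_im] at hsq
  linear_combination hsq

theorem re_neg_I_mul_div_of_norm_add_mul_I_eq {z : ℂ} (hz : z ≠ 0) {s : ℝ}
    (h : ‖z + s * I‖ = s) (τ : ℝ) : (-(I * τ) / z).re = τ / (2 * s) := by
  have hnormSq := normSq_eq_of_norm_add_mul_I_eq h
  have hs_im : s * z.im ≠ 0 := by
    intro h0
    rw [mul_assoc, h0, mul_zero, neg_zero, normSq_eq_zero] at hnormSq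
    exact hz hnormSq
  have hs : s ≠ 0 := left_ne_zero_of_mul hs_im
  have him : z.im ≠ 0 := right_ne_zero_of_mul hs_im
  rw [div_re, hnormSq]
  simp only [neg_re, neg_im, mul_re, mul_im, I_re, I_im, ofReal_re, ofReal_im]
  field_simp
  ring

end Complex

open Complex in
theorem norm_vtau_of_dist_eq {s : ℝ} {x y : ℝ × ℝ} (hxy : y ≠ x)
    (h : Real.sqrt ((y.1 - x.1) ^ 2 + (y.2 - x.2 + s) ^ 2) = s) (τ : ℝ) :
    ‖vtau τ x y‖ = Real.exp (τ / (2 * s)) := by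
  set z : ℂ := ((y.1 - x.1 : ℝ) : ℂ) + I * ((y.2 - x.2 : ℝ) : ℂ) with hz_def
  have hz : z ≠ 0 := by
    intro h0
    have hre := congrArg re h0
    have him := congrArg im h0
    simp only [hz_def, add_re, add_im, ofReal_re, ofReal_im, mul_re, mul_im, I_re, I_im,
      zero_re, zero_im] at hre him
    exact hxy (Prod.ext (by linarith) (by linarith))
  have hcircle : ‖z + s * I‖ = s := by
    have hsum : z + s * I = ((y.1 - x.1 : ℝ) : ℂ) + ((y.2 - x.2 + s : ℝ) : ℂ) * I := by
      rw [hz_def]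
      push_cast
      ring
    rw [hsum, norm_add_mul_I, h]
  rw [vtau, norm_exp, re_neg_I_mul_div_of_norm_add_mul_I_eq hz hcircle]

theorem stmt3_general (s : ℝ) (x y : ℝ × ℝ) (hxy : y ≠ x)
    (h : Real.sqrt ((y.1 - x.1) ^ 2 + (y.2 - x.2 + s) ^ 2) = s) :
    ∀ τ : ℝ, 0 < τ →
      ‖(((Real.exp (-τ / (2 * s)) : ℝ) * vtau τ x y : ℂ))‖ = 1 ∧
      Real.sqrt (‖(((Real.exp (-τ / (2 * s)) : ℝ) * vtau τ x y : ℂ))‖ ^ 2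
          + ‖(((Real.exp (-τ / (2 * s)) : ℝ) * (Complex.I * vtau τ x y) : ℂ))‖ ^ 2)
        = Real.sqrt 2 := by
  intro τ _
  have hnorm : ‖(((Real.exp (-τ / (2 * s)) : ℝ) * vtau τ x y : ℂ))‖ = 1 := by
    rw [norm_mul, norm_vtau_of_dist_eq hxy h, Complex.norm_real, Real.norm_of_nonneg
      (Real.exp_pos _).le, ← Real.exp_add, neg_div, neg_add_cancel, Real.exp_zero]
  have hnorm_I : ‖(((Real.exp (-τ / (2 * s)) : ℝ) * (Complex.I * vtau τ x y) : ℂ))‖ = 1 := by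
    rw [mul_left_comm, norm_mul, Complex.norm_I, one_mul, hnorm]
  refine ⟨hnorm, ?_⟩
  rw [hnorm, hnorm_I]
  norm_num

theorem stmt3 (s : ℝ) (hs : 0 < s) (x y : ℝ × ℝ) (hxy : y ≠ x)
    (h : Real.sqrt ((y.1 - x.1) ^ 2 + (y.2 - x.2 + s) ^ 2) = s) :
    ∀ τ : ℝ, 0 < τ →
      ‖(((Real.exp (-τ / (2 * s)) : ℝ) * vtau τ x y : ℂ))‖ = 1 ∧
      Real.sqrt (‖(((Real.exp (-τ / (2 * s)) : ℝ) * vtau τ x y : ℂ))‖ ^ 2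
          + ‖(((Real.exp (-τ / (2 * s)) : ℝ) * (Complex.I * vtau τ x y) : ℂ))‖ ^ 2)
        = Real.sqrt 2 :=
  stmt3_general s x y hxy h
end

section
/- Fix x ∈ ℝ², τ > 0, and let 𝐯_τ(y;x) := (v_τ(y;x), i·v_τ(y;x)). Then for every y ≠ x, σ(𝐯_τ(·;x))(y) e₂ = 2μτ w² 𝐯_τ(y;x), where w := ((y₂−x₂) + i(y₁−x₁))/|y−x|² (which equals the bilinear dot product of (y−x)/|y−x|² with e₂ + i e₁, with e₁ = (1,0), e₂ = (0,1)). -/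
/-- Partial derivative with respect to the first variable. -/
noncomputable def pd1 (f : ℝ × ℝ → ℂ) (p : ℝ × ℝ) : ℂ := fderiv ℝ f p (1, 0)

/-- Partial derivative with respect to the second variable. -/
noncomputable def pd2 (f : ℝ × ℝ → ℂ) (p : ℝ × ℝ) : ℂ := fderiv ℝ f p (0, 1)

/-- The second column `σ(u) e₂ = (σ₁₂, σ₂₂)` of the stress tensor
`σ(u) = λ tr(ε(u)) I + 2μ ε(u)`, `ε(u) = (∇u + (∇u)ᵀ)/2`, of a field `u : ℝ² → ℂ²`. -/
noncomputable def sigmaE2 (lam μ : ℝ) (u : ℝ × ℝ → ℂ × ℂ) (y : ℝ × ℝ) : ℂ × ℂ :=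
  ((μ : ℂ) * (pd1 (fun z => (u z).2) y + pd2 (fun z => (u z).1) y),
   (lam : ℂ) * (pd1 (fun z => (u z).1) y + pd2 (fun z => (u z).2) y)
     + 2 * (μ : ℂ) * pd2 (fun z => (u z).2) y)

/-- `w = ((y₂−x₂) + i(y₁−x₁))/|y−x|²`, the dot product of `(y−x)/|y−x|²` with `e₂ + i e₁`. -/
noncomputable def wfun (x y : ℝ × ℝ) : ℂ :=
  (((y.2 - x.2 : ℝ) : ℂ) + Complex.I * ((y.1 - x.1 : ℝ) : ℂ))
    / (((y.1 - x.1) ^ 2 + (y.2 - x.2) ^ 2 : ℝ) : ℂ)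

/-
Identify `ℝ²` with `ℂ` via `ofRealProd (a, b) = a + b i`. Then `v_τ(·;x) = f ∘ ofRealProd` with
`f(w) = exp(-iτ/(w - ζ₀))` holomorphic off `ζ₀ = ofRealProd x`, so `∂₁ v_τ = f'` and
`∂₂ v_τ = i f'`. For the pair `(v, i v)` the divergence `∂₁v + i ∂₂v = f' + i² f'` vanishes and
`σ e₂ = 2μ (i f', -f') = 2μ i f' (1, i)`. Finally, with `ζ = ofRealProd y - ζ₀`,
`i f' = -τ f / ζ²` and `w = i / ζ`, so `i f' = τ w² f`.
-/

open Complex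

noncomputable def ofRealProd : ℝ × ℝ →L[ℝ] ℂ := equivRealProdCLM.symm

@[simp]
lemma ofRealProd_apply (p : ℝ × ℝ) : ofRealProd p = p.1 + p.2 * I :=
  equivRealProd_symm_apply p

lemma ofRealProd_injective : Function.Injective ofRealProd :=
  equivRealProdCLM.symm.injective

section Partials

variable {f : ℝ × ℝ → ℂ} {c : ℂ} {p : ℝ × ℝ}

lemma pd1_eq_of_hasFDerivAt (h : HasFDerivAt f (c • ofRealProd) p) : pd1 f p = c := by
  simp [pd1, h.fderiv]

lemma pd2_eq_of_hasFDerivAt (h : HasFDerivAt f (c • ofRealProd) p) : pd2 f p = c * I := by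
  simp [pd2, h.fderiv]

lemma sigmaE2_pair_I_mul_of_hasFDerivAt (lam μ : ℝ) (h : HasFDerivAt f (c • ofRealProd) p) :
    sigmaE2 lam μ (fun z => (f z, I * f z)) p = (2 * μ * (I * c), 2 * μ * (I * (I * c))) := by
  have hI : HasFDerivAt (fun z => I * f z) ((I * c) • ofRealProd) p := by
    simpa only [smul_smul] using h.const_mul I
  simp only [sigmaE2, pd1_eq_of_hasFDerivAt h, pd2_eq_of_hasFDerivAt h,
    pd1_eq_of_hasFDerivAt hI, pd2_eq_of_hasFDerivAt hI, Prod.mk.injEq]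
  exact ⟨by ring, by linear_combination (lam : ℂ) * c * I_sq⟩

end Partials

lemma hasDerivAt_exp_div_sub {a b w : ℂ} (hw : w ≠ b) :
    HasDerivAt (fun w => exp (a / (w - b))) (exp (a / (w - b)) * (-a / (w - b) ^ 2)) w := by
  have h := (hasDerivAt_const w a).fun_div ((hasDerivAt_id' w).sub_const b) (sub_ne_zero.2 hw)
  exact h.cexp.congr_deriv (by ring)

lemma vtau_eq_comp (τ : ℝ) (x : ℝ × ℝ) :
    vtau τ x = (fun w => exp (-(I * τ) / (w - ofRealProd x))) ∘ ofRealProd := by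
  ext z
  simp only [vtau, Function.comp_apply, ofRealProd_apply]
  push_cast
  congr 1
  ring

lemma hasFDerivAt_vtau (τ : ℝ) {x y : ℝ × ℝ} (hxy : y ≠ x) :
    HasFDerivAt (vtau τ x)
      ((vtau τ x y * (I * τ / (ofRealProd y - ofRealProd x) ^ 2)) • ofRealProd) y := by
  have h := (hasDerivAt_exp_div_sub (a := -(I * τ)) (ofRealProd_injective.ne hxy)
    ).comp_hasFDerivAt y ofRealProd.hasFDerivAt
  rw [← vtau_eq_comp, neg_neg] at h
  rwa [congrFun (vtau_eq_comp τ x) y]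

lemma wfun_eq_I_div (x y : ℝ × ℝ) : wfun x y = I / (ofRealProd y - ofRealProd x) := by
  have hζ : ofRealProd y - ofRealProd x = ((y.1 - x.1 : ℝ) : ℂ) + ((y.2 - x.2 : ℝ) : ℂ) * I := by
    simp only [ofRealProd_apply]
    push_cast
    ring
  rw [hζ, div_eq_mul_inv, inv_def, normSq_add_mul_I, wfun]
  generalize y.1 - x.1 = a
  generalize y.2 - x.2 = b
  simp only [map_add, map_mul, conj_ofReal, conj_I, ofReal_inv, div_eq_mul_inv]
  linear_combination (b : ℂ) * ((a ^ 2 + b ^ 2 : ℝ) : ℂ)⁻¹ * I_sq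

theorem stmt5_general (x : ℝ × ℝ) (τ : ℝ) (lam μ : ℝ)
    (y : ℝ × ℝ) (hxy : y ≠ x) :
    sigmaE2 lam μ (fun z => ((vtau τ x z, Complex.I * vtau τ x z) : ℂ × ℂ)) y
      = (2 * (μ : ℂ) * (τ : ℂ) * (wfun x y) ^ 2 * vtau τ x y,
         2 * (μ : ℂ) * (τ : ℂ) * (wfun x y) ^ 2 * (Complex.I * vtau τ x y)) := by
  have key : I * (vtau τ x y * (I * τ / (ofRealProd y - ofRealProd x) ^ 2))
      = τ * wfun x y ^ 2 * vtau τ x y := by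
    rw [wfun_eq_I_div, div_pow]
    ring
  rw [sigmaE2_pair_I_mul_of_hasFDerivAt lam μ (hasFDerivAt_vtau τ hxy), key]
  exact Prod.ext (by ring) (by ring)

theorem stmt5 (x : ℝ × ℝ) (τ : ℝ) (hτ : 0 < τ) (lam μ : ℝ) (hμ : 0 < μ) (hlm : 0 < lam + μ)
    (y : ℝ × ℝ) (hxy : y ≠ x) :
    sigmaE2 lam μ (fun z => ((vtau τ x z, Complex.I * vtau τ x z) : ℂ × ℂ)) y
      = (2 * (μ : ℂ) * (τ : ℂ) * (wfun x y) ^ 2 * vtau τ x y,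
         2 * (μ : ℂ) * (τ : ℂ) * (wfun x y) ^ 2 * (Complex.I * vtau τ x y)) :=
  stmt5_general x τ lam μ y hxy
end

section
/- Let s, δ, d, R > 0 with d ≤ R, and x ∈ ℝ². Then for every τ > 0 and every y ∈ ℝ² with |y − (x − s e₂)| ≥ s + δ and d ≤ |y − x| ≤ R (e₂ = (0,1)), one has e^{−τ/(2s)} ‖σ(𝐯_τ(·;x))(y) e₂‖ ≤ (2√2 μ/d²) · τ · exp(−τ δ(2s+δ)/(2sR²)), where 𝐯_τ(y;x) := (v_τ(y;x), i v_τ(y;x)). In particular, e^{−τ/(2s)} ‖σ(𝐯_τ(·;x))(y) e₂‖ decays exponentially as τ → ∞, uniformly on such y. -/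
/-!
Identify `ℝ²` with `ℂ` via `ζ = (y₁ - x₁) + i (y₂ - x₂)`. Then `v_τ = exp(-iτ/ζ)` is
holomorphic in `ζ`, so `∂₂v = i ∂₁v` with `∂₁v = iτ/ζ² · v`, and for `𝐯 = (v, i v)` the
stress column is `σ(𝐯) e₂ = 2μ ∂₁v · (i, -1)`, of norm `2√2 μ τ |ζ|⁻² e^{-τ Im ζ/|ζ|²}`.
The hypothesis `|ζ + i s| ≥ s + δ` says `|ζ|² + 2 s Im ζ ≥ δ (2s + δ)`, so that
`τ/(2s) + τ Im ζ/|ζ|² ≥ τ δ (2s + δ)/(2 s |ζ|²) ≥ τ δ (2s + δ)/(2 s R²)`.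
-/

open Complex

section PartialDerivatives

variable {f : ℝ × ℝ → ℂ} {p : ℝ × ℝ}

lemma pd1_const_mul (c : ℂ) (hf : DifferentiableAt ℝ f p) :
    pd1 (fun z => c * f z) p = c * pd1 f p := by
  simp [pd1, fderiv_const_mul hf]

lemma pd2_const_mul (c : ℂ) (hf : DifferentiableAt ℝ f p) :
    pd2 (fun z => c * f z) p = c * pd2 f p := by
  simp [pd2, fderiv_const_mul hf]

variable {g : ℂ → ℂ} {g' : ℂ} {x : ℝ × ℝ}

lemma HasDerivAt.hasFDerivAt_comp_equivRealProd_sub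
    (hg : HasDerivAt g g' (equivRealProd.symm (p - x))) :
    HasFDerivAt (fun z => g (equivRealProd.symm (z - x)))
      (g' • (equivRealProdCLM.symm : ℝ × ℝ →L[ℝ] ℂ)) p := by
  have hlin : HasFDerivAt (fun z : ℝ × ℝ => equivRealProd.symm (z - x))
      (equivRealProdCLM.symm : ℝ × ℝ →L[ℝ] ℂ) p :=
    (equivRealProdCLM.symm : ℝ × ℝ →L[ℝ] ℂ).hasFDerivAt.comp p (hasFDerivAt_sub_const x)
  exact hg.comp_hasFDerivAt p hlin

lemma pd1_comp_equivRealProd_sub (hg : HasDerivAt g g' (equivRealProd.symm (p - x))) :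
    pd1 (fun z => g (equivRealProd.symm (z - x))) p = g' := by
  rw [pd1, hg.hasFDerivAt_comp_equivRealProd_sub.fderiv]
  simp [equivRealProdCLM_symm_apply]

lemma pd2_comp_equivRealProd_sub (hg : HasDerivAt g g' (equivRealProd.symm (p - x))) :
    pd2 (fun z => g (equivRealProd.symm (z - x))) p = I * g' := by
  rw [pd2, hg.hasFDerivAt_comp_equivRealProd_sub.fderiv]
  simp [equivRealProdCLM_symm_apply, mul_comm]

end PartialDerivatives

/-- A field `(g, i g)` with `∂₂g = i ∂₁g` is divergence free, so `λ` drops out of the stress. -/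
lemma sigmaE2_of_pd2_eq_I_mul_pd1 (lam μ : ℝ) {g : ℝ × ℝ → ℂ} {y : ℝ × ℝ}
    (hg : DifferentiableAt ℝ g y) (hCR : pd2 g y = I * pd1 g y) :
    sigmaE2 lam μ (fun z => (g z, I * g z)) y = (2 * μ * I * pd1 g y, -(2 * μ * pd1 g y)) := by
  simp only [sigmaE2, pd1_const_mul I hg, pd2_const_mul I hg, hCR]
  ext
  · ring
  · linear_combination ((lam : ℂ) + 2 * μ) * pd1 g y * I_mul_I

lemma sqrt_norm_sq_add_norm_sq_stress {μ : ℝ} (hμ : 0 ≤ μ) (w : ℂ) :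
    Real.sqrt (‖2 * (μ : ℂ) * I * w‖ ^ 2 + ‖-(2 * (μ : ℂ) * w)‖ ^ 2) = 2 * Real.sqrt 2 * μ * ‖w‖ := by
  have hnorm : ‖2 * (μ : ℂ) * w‖ = 2 * μ * ‖w‖ := by
    simp [abs_of_nonneg hμ]
  rw [mul_right_comm, norm_mul, norm_I, mul_one, norm_neg, hnorm,
    show (2 * μ * ‖w‖) ^ 2 + (2 * μ * ‖w‖) ^ 2 = 2 * (2 * μ * ‖w‖) ^ 2 by ring,
    Real.sqrt_mul zero_le_two, Real.sqrt_sq (by positivity)]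
  ring

lemma hasDerivAt_cexp_neg_I_mul_div (τ : ℝ) {ζ : ℂ} (hζ : ζ ≠ 0) :
    HasDerivAt (fun w => cexp (-(I * τ) / w)) (I * τ / ζ ^ 2 * cexp (-(I * τ) / ζ)) ζ := by
  have h := ((hasDerivAt_inv hζ).const_mul (-(I * τ))).cexp
  simp only [← div_eq_mul_inv] at h
  refine h.congr_deriv ?_
  field_simp

lemma norm_I_mul_div_sq_mul_cexp {τ : ℝ} (hτ : 0 ≤ τ) (ζ : ℂ) :
    ‖I * τ / ζ ^ 2 * cexp (-(I * τ) / ζ)‖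
      = τ / normSq ζ * Real.exp (-(τ * ζ.im) / normSq ζ) := by
  simp [norm_exp, div_re, normSq_eq_norm_sq, abs_of_nonneg hτ]

section Vtau

variable (τ : ℝ) {x y : ℝ × ℝ}

lemma vtau_eq :
    vtau τ x = fun z => cexp (-(I * τ) / equivRealProd.symm (z - x)) := by
  ext z
  simp [vtau, equivRealProd_symm_apply, mul_comm]

lemma differentiableAt_vtau (h : equivRealProd.symm (y - x) ≠ 0) :
    DifferentiableAt ℝ (vtau τ x) y := by
  rw [vtau_eq]
  exact (hasDerivAt_cexp_neg_I_mul_div τ h).hasFDerivAt_comp_equivRealProd_sub.differentiableAt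

lemma pd1_vtau (h : equivRealProd.symm (y - x) ≠ 0) :
    pd1 (vtau τ x) y = I * τ / equivRealProd.symm (y - x) ^ 2
      * cexp (-(I * τ) / equivRealProd.symm (y - x)) := by
  rw [vtau_eq]
  exact pd1_comp_equivRealProd_sub (hasDerivAt_cexp_neg_I_mul_div τ h)

lemma pd2_vtau (h : equivRealProd.symm (y - x) ≠ 0) :
    pd2 (vtau τ x) y = I * pd1 (vtau τ x) y := by
  rw [pd1_vtau τ h, vtau_eq]
  exact pd2_comp_equivRealProd_sub (hasDerivAt_cexp_neg_I_mul_div τ h)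

end Vtau

lemma neg_div_add_neg_im_div_normSq_le {τ s δ R : ℝ} {ζ : ℂ} (hτ : 0 ≤ τ) (hs : 0 < s)
    (hδ : 0 ≤ δ) (hζ : 0 < normSq ζ) (hζR : normSq ζ ≤ R ^ 2)
    (hsδ : (s + δ) ^ 2 ≤ normSq (ζ + s * I)) :
    -τ / (2 * s) + -(τ * ζ.im) / normSq ζ ≤ -τ * δ * (2 * s + δ) / (2 * s * R ^ 2) := by
  have hkey : δ * (2 * s + δ) ≤ normSq ζ + 2 * s * ζ.im := by
    simp only [normSq_apply, add_re, add_im, mul_re, mul_im, ofReal_re, ofReal_im, I_re, I_im]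
      at hsδ ⊢
    nlinarith
  calc -τ / (2 * s) + -(τ * ζ.im) / normSq ζ
      = -(τ * (normSq ζ + 2 * s * ζ.im) / (2 * s * normSq ζ)) := by field_simp; ring
    _ ≤ -(τ * (δ * (2 * s + δ)) / (2 * s * R ^ 2)) := by
      rw [neg_le_neg_iff]
      gcongr
      exact mul_nonneg hτ (hkey.trans' (by positivity))
    _ = -τ * δ * (2 * s + δ) / (2 * s * R ^ 2) := by ring

theorem stmt16_general (lam μ s δ d R : ℝ) (hμ : 0 < μ)
    (hs : 0 < s) (hδ : 0 < δ) (hd : 0 < d) (x : ℝ × ℝ) :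
    ∀ τ : ℝ, 0 < τ → ∀ y : ℝ × ℝ,
      s + δ ≤ Real.sqrt ((y.1 - x.1) ^ 2 + (y.2 - x.2 + s) ^ 2) →
      d ≤ Real.sqrt ((y.1 - x.1) ^ 2 + (y.2 - x.2) ^ 2) →
      Real.sqrt ((y.1 - x.1) ^ 2 + (y.2 - x.2) ^ 2) ≤ R →
      Real.exp (-τ / (2 * s)) *
          Real.sqrt
            (‖(sigmaE2 lam μ
                (fun z => ((vtau τ x z, Complex.I * vtau τ x z) : ℂ × ℂ)) y).1‖ ^ 2
              + ‖(sigmaE2 lam μ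
                (fun z => ((vtau τ x z, Complex.I * vtau τ x z) : ℂ × ℂ)) y).2‖ ^ 2)
        ≤ (2 * Real.sqrt 2 * μ / d ^ 2) * τ * Real.exp (-τ * δ * (2 * s + δ) / (2 * s * R ^ 2)) := by
  intro τ hτ y hfar hnear hbounded
  set ζ := equivRealProd.symm (y - x)
  have hnormSq : (y.1 - x.1) ^ 2 + (y.2 - x.2) ^ 2 = normSq ζ := by
    simp [ζ, normSq_apply, sq]
  have hnormSq_shift : (y.1 - x.1) ^ 2 + (y.2 - x.2 + s) ^ 2 = normSq (ζ + s * I) := by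
    simp [ζ, normSq_apply, sq]
  rw [hnormSq] at hnear hbounded
  rw [hnormSq_shift] at hfar
  have hdζ : d ^ 2 ≤ normSq ζ := (Real.le_sqrt' hd).1 hnear
  have hζ : 0 < normSq ζ := (pow_pos hd 2).trans_le hdζ
  have hζ0 : ζ ≠ 0 := normSq_pos.1 hζ
  rw [sigmaE2_of_pd2_eq_I_mul_pd1 lam μ (differentiableAt_vtau τ hζ0) (pd2_vtau τ hζ0),
    sqrt_norm_sq_add_norm_sq_stress hμ.le, pd1_vtau τ hζ0, norm_I_mul_div_sq_mul_cexp hτ.le]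
  calc Real.exp (-τ / (2 * s)) *
        (2 * √2 * μ * (τ / normSq ζ * Real.exp (-(τ * ζ.im) / normSq ζ)))
      = 2 * √2 * μ * (τ / normSq ζ) * Real.exp (-τ / (2 * s) + -(τ * ζ.im) / normSq ζ) := by
        rw [Real.exp_add]; ring
    _ ≤ 2 * √2 * μ * (τ / d ^ 2) * Real.exp (-τ * δ * (2 * s + δ) / (2 * s * R ^ 2)) := by
        gcongr
        exact neg_div_add_neg_im_div_normSq_le hτ.le hs hδ.le hζ (Real.sqrt_le_iff.1 hbounded).2
          ((Real.le_sqrt' (by positivity)).1 hfar)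
    _ = 2 * √2 * μ / d ^ 2 * τ * Real.exp (-τ * δ * (2 * s + δ) / (2 * s * R ^ 2)) := by ring

theorem stmt16 (lam μ s δ d R : ℝ) (hμ : 0 < μ) (hlm : 0 < lam + μ)
    (hs : 0 < s) (hδ : 0 < δ) (hd : 0 < d) (hR : 0 < R) (hdR : d ≤ R) (x : ℝ × ℝ) :
    ∀ τ : ℝ, 0 < τ → ∀ y : ℝ × ℝ,
      s + δ ≤ Real.sqrt ((y.1 - x.1) ^ 2 + (y.2 - x.2 + s) ^ 2) →
      d ≤ Real.sqrt ((y.1 - x.1) ^ 2 + (y.2 - x.2) ^ 2) →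
      Real.sqrt ((y.1 - x.1) ^ 2 + (y.2 - x.2) ^ 2) ≤ R →
      Real.exp (-τ / (2 * s)) *
          Real.sqrt
            (‖(sigmaE2 lam μ
                (fun z => ((vtau τ x z, Complex.I * vtau τ x z) : ℂ × ℂ)) y).1‖ ^ 2
              + ‖(sigmaE2 lam μ
                (fun z => ((vtau τ x z, Complex.I * vtau τ x z) : ℂ × ℂ)) y).2‖ ^ 2)
        ≤ (2 * Real.sqrt 2 * μ / d ^ 2) * τ * Real.exp (-τ * δ * (2 * s + δ) / (2 * s * R ^ 2)) :=
  stmt16_general lam μ s δ d R hμ hs hδ hd x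
end
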